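/- arXiv:1511.05637 — 3 statements merged into one kernel-verified Lean document; each statement's English description precedes it below -/
import Mathlib

section
/- Assume E T < ∞. The dual process Y is itself an undelayed renewal sequence: Y_0 = 1 and the gaps between successive 1's of Y are i.i.d. copies of a random variable T_Y with values in {1,2,…}∪{∞} whose distribution satisfies P(T_Y = 1) = P(T = 1)·(1 − α_0), and for every k ≥ 2, P(T_Y = k) = E[(1 − α_{k−1}^{ξ_k}) ∏_{i=1}^{k−1} α_{i−1}^{ξ_i}]; equivalently, P(T_Y ≥ k) = E[∏_{i=1}^{k−1} α_{i−1}^{ξ_i}] for all k ≥ 2. -/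
open MeasureTheory ProbabilityTheory Filter Set
open scoped ENNReal Classical

noncomputable section

namespace RenewalPerc

variable {Ω : Type*} [MeasurableSpace Ω]

/-- The undelayed renewal sequence `ξ` built from the inter-arrival times `T`:
`ξ_i = 1` iff `i` is a renewal time, i.e. iff some partial sum of the
inter-arrival times equals `i`. -/
def xi (T : ℕ → Ω → ℕ∞) (i : ℕ) (ω : Ω) : ℕ :=
  if ∃ j : ℕ, (∑ l ∈ Finset.range j, T l ω) = (i : ℕ∞) then 1 else 0

/-- The expectation `E T` of the inter-arrival time, in `ℝ≥0∞`. -/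
def ET (P : Measure Ω) (T : ℕ → Ω → ℕ∞) : ℝ≥0∞ :=
  ∫⁻ ω, (T 0 ω : ℝ≥0∞) ∂P

/-- `α_n = P(R ≤ n)`, as an extended nonnegative real. -/
def alphaE (P : Measure Ω) (R : ℕ → Ω → ℕ) (n : ℕ) : ℝ≥0∞ :=
  P {ω | R 0 ω ≤ n}

/-- `α_n = P(R ≤ n)`, as a real number. -/
def alphaR (P : Measure Ω) (R : ℕ → Ω → ℕ) (n : ℕ) : ℝ :=
  (alphaE P R n).toReal

/-- `P(ξ_i = 1)`, as a real number. -/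
def pxi (P : Measure Ω) (T : ℕ → Ω → ℕ∞) (i : ℕ) : ℝ :=
  (P {ω | xi T i ω = 1}).toReal

/-- The random interval `C_l = {l+1, …, l+R_l}` if `ξ_l = 1` (empty if `R_l = 0`),
and `C_l = ∅` otherwise. -/
def cover (T : ℕ → Ω → ℕ∞) (R : ℕ → Ω → ℕ) (l : ℕ) (ω : Ω) : Set ℕ :=
  if xi T l ω = 1 then Set.Ioc l (l + R l ω) else ∅

/-- The connectivity relation `i ↔ j`. -/
def connects (T : ℕ → Ω → ℕ∞) (R : ℕ → Ω → ℕ) (i j : ℕ) (ω : Ω) : Prop :=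
  xi T i ω = 1 ∧ xi T j ω = 1 ∧
    ∃ m n, m ≤ n ∧ n < j ∧ Set.Icc i j ⊆ ⋃ l ∈ Set.Icc m n, cover T R l ω

/-- The percolation event `A = ⋂_{i ≥ 1} ⋃_{j ≥ i} {0 ↔ j}`. -/
def percSet (T : ℕ → Ω → ℕ∞) (R : ℕ → Ω → ℕ) : Set Ω :=
  ⋂ i ∈ {i : ℕ | 1 ≤ i}, ⋃ j ∈ {j : ℕ | i ≤ j}, {ω | connects T R 0 j ω}

/-- `B_n`: the sets of newly informed individuals of the dual (reverse firework)
process. -/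
def Bset (T : ℕ → Ω → ℕ∞) (R : ℕ → Ω → ℕ) : ℕ → Ω → Set ℕ
  | 0 => fun _ => {0}
  | n + 1 => fun ω =>
      {i | xi T i ω = 1 ∧ (Set.Ico (i - R i ω) i ∩ Bset T R n ω).Nonempty ∧
        ∀ m, m ≤ n → i ∉ Bset T R m ω}

/-- The dual process `Y`: `Y_i = 1` iff site `i` is eventually informed. -/
def Ydual (T : ℕ → Ω → ℕ∞) (R : ℕ → Ω → ℕ) (i : ℕ) (ω : Ω) : ℕ :=
  if ∃ n, i ∈ Bset T R n ω then 1 else 0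

/-- The successive positions of the `1`'s of the dual process `Y`
(taking the value `∞` once there are no more `1`'s). -/
def renewalY (T : ℕ → Ω → ℕ∞) (R : ℕ → Ω → ℕ) : ℕ → Ω → ℕ∞
  | 0 => fun _ => 0
  | j + 1 => fun ω =>
      sInf {x : ℕ∞ | renewalY T R j ω < x ∧ ∃ i : ℕ, x = (i : ℕ∞) ∧ Ydual T R i ω = 1}

/-- The gaps between successive `1`'s of the dual process `Y`. -/
def gapY (T : ℕ → Ω → ℕ∞) (R : ℕ → Ω → ℕ) (j : ℕ) (ω : Ω) : ℕ∞ :=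
  renewalY T R (j + 1) ω - renewalY T R j ω

/-- `q_i^* = max_{n ≤ i} q_n`. -/
def qstar (q : ℕ → ℝ) (i : ℕ) : ℝ :=
  (Finset.range (i + 1)).sup' Finset.nonempty_range_add_one q

/-- `C_k = (∑_{j=1}^k ∏_{i=k}^{k+j-1} q_i^*)^2`. -/
def Cseq (q : ℕ → ℝ) (k : ℕ) : ℝ :=
  (∑ j ∈ Finset.Icc 1 k, ∏ i ∈ Finset.range j, qstar q (k + i)) ^ 2

/-- The coupled house-of-cards chains, all driven by the same uniform
variables `U`, started at `n`. -/
def hoc (q : ℕ → ℝ) (U : ℕ → Ω → ℝ) (n : ℕ) : ℕ → Ω → ℕ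
  | 0 => fun _ => n
  | l + 1 => fun ω => if U (l + 1) ω ≤ q (hoc q U n l ω) then hoc q U n l ω + 1 else 0

/-- The merging time `T_k = inf{l ≥ 1 : ζ^{(n)}_l = 0 for all n = 0,…,k}`. -/
def mergeT (q : ℕ → ℝ) (U : ℕ → Ω → ℝ) (k : ℕ) (ω : Ω) : ℕ∞ :=
  sInf {x : ℕ∞ | ∃ l : ℕ, x = (l : ℕ∞) ∧ 1 ≤ l ∧ ∀ n, n ≤ k → hoc q U n l ω = 0}

/-!
Once a site `s` is informed and none of `s + 1, …, i - 1` is, site `i` is informed iff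
`ξ_i = 1` and `R_i ≥ i - s`. Hence the gap of `Y` that starts at an informed site `s` equals `g`
iff `s + g` is the first site after `s` with `ξ = 1` whose radius reaches back to `s`.
Conditioning on `ξ`, independent of the i.i.d. radii, turns the probability of this event into
`E[(1 - α_{g-1}^{ξ_{s+g}}) ∏_{0<j<g} α_{j-1}^{ξ_{s+j}}]`, whose integrand vanishes unless
`ξ_{s+g} = 1`; for consecutive gaps it gives the expectation of a product of such block weights.
On `{ξ_k = 1}` the future `(ξ_{k+i})_i` of the renewal sequence is independent of its past and
distributed as `ξ` (split according to which partial sum of the inter-arrival times equals `k`),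
so this expectation factorises block by block.
-/

/-- `xi T i ω` unfolds to `renewalSeq (fun l => T l ω) i`. -/
def renewalSeq (f : ℕ → ℕ∞) (i : ℕ) : ℕ :=
  if ∃ j : ℕ, (∑ l ∈ Finset.range j, f l) = (i : ℕ∞) then 1 else 0

/-- Replacing the terms from index `c` on by `∞` keeps exactly the first `c` renewals. -/
def truncateTop (c : ℕ) (f : ℕ → ℕ∞) : ℕ → ℕ∞ := fun l => if l < c then f l else ⊤

section RenewalSeq

variable {f : ℕ → ℕ∞}

lemma renewalSeq_eq_one_iff {i : ℕ} :
    renewalSeq f i = 1 ↔ ∃ j : ℕ, (∑ l ∈ Finset.range j, f l) = (i : ℕ∞) := by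
  unfold renewalSeq; split_ifs <;> simp_all

lemma renewalSeq_le_one (i : ℕ) : renewalSeq f i ≤ 1 := by
  unfold renewalSeq; split_ifs <;> simp

lemma renewalSeq_eq_zero_of_ne_one {i : ℕ} (h : renewalSeq f i ≠ 1) : renewalSeq f i = 0 := by
  have := renewalSeq_le_one (f := f) i; omega

lemma measurable_renewalSeq : Measurable renewalSeq := by
  refine measurable_pi_lambda _ fun i => Measurable.ite ?_ measurable_const measurable_const
  rw [Set.ofPred_exists]
  exact .iUnion fun j =>
    (Finset.measurable_sum _ fun l _ => measurable_pi_apply l) (measurableSet_singleton (i : ℕ∞))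

lemma card_le_sum_range (hf : ∀ l, 1 ≤ f l) (c : ℕ) : (c : ℕ∞) ≤ ∑ l ∈ Finset.range c, f l := by
  simpa using Finset.card_nsmul_le_sum (Finset.range c) f 1 fun l _ => hf l

lemma eq_of_sum_range_eq (hf : ∀ l, 1 ≤ f l) {c c' k : ℕ}
    (hc : ∑ l ∈ Finset.range c, f l = k) (hc' : ∑ l ∈ Finset.range c', f l = k) : c = c' := by
  wlog hlt : c < c' generalizing c c'
  · rcases (not_lt.1 hlt).eq_or_lt with h | h
    · exact h.symm
    · exact (this hc' hc h).symm
  obtain ⟨d, rfl⟩ := Nat.exists_eq_add_of_lt hlt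
  rw [add_assoc, Finset.sum_range_add, hc] at hc'
  have h1 : (1 : ℕ∞) ≤ ∑ l ∈ Finset.range (d + 1), f (c + l) := by
    exact le_trans (by simp) (card_le_sum_range (f := fun l => f (c + l)) (fun l => hf _) (d + 1))
  have : (k : ℕ∞) + 1 ≤ k := by
    calc (k : ℕ∞) + 1 ≤ k + ∑ l ∈ Finset.range (d + 1), f (c + l) := by gcongr
      _ = k := hc'
  exact absurd this (by exact_mod_cast Nat.not_succ_le_self k)

lemma renewalSeq_add {c k : ℕ} (hc : ∑ l ∈ Finset.range c, f l = k) (i : ℕ) :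
    renewalSeq f (k + i) = renewalSeq (fun l => f (c + l)) i := by
  unfold renewalSeq
  congr 1
  apply propext
  constructor
  · rintro ⟨j, hj⟩
    rcases le_or_gt c j with hcj | hjc
    · obtain ⟨d, rfl⟩ := Nat.exists_eq_add_of_le hcj
      rw [Finset.sum_range_add, hc] at hj
      push_cast at hj
      exact ⟨d, ENat.add_right_injective_of_ne_top (ENat.natCast_ne_top k) hj⟩
    · refine ⟨0, ?_⟩
      have : ((k + i : ℕ) : ℕ∞) ≤ k := by
        rw [← hj, ← hc]; exact Finset.sum_le_sum_of_subset (by simpa using hjc.le)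
      have : i = 0 := by have := ENat.natCast_le_natCast.1 this; omega
      simp [this]
  · rintro ⟨j, hj⟩
    exact ⟨c + j, by rw [Finset.sum_range_add, hc, hj]; push_cast; rfl⟩

lemma renewalSeq_one_eq_one_iff (hf : ∀ l, 1 ≤ f l) : renewalSeq f 1 = 1 ↔ f 0 = 1 := by
  rw [renewalSeq_eq_one_iff]
  refine ⟨fun ⟨j, hj⟩ => ?_, fun h => ⟨1, by simpa using h⟩⟩
  rcases Nat.eq_zero_or_pos j with rfl | hj0
  · simp at hj
  · have : f 0 ≤ 1 := by
      rw [← Nat.cast_one, ← hj]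
      exact Finset.single_le_sum (fun _ _ => zero_le) (Finset.mem_range.2 hj0)
    exact le_antisymm this (hf 0)

lemma sum_range_truncateTop {c j : ℕ} (hj : j ≤ c) :
    ∑ l ∈ Finset.range j, truncateTop c f l = ∑ l ∈ Finset.range j, f l :=
  Finset.sum_congr rfl fun l hl => if_pos (by simp at hl; omega)

lemma renewalSeq_truncateTop {c k i : ℕ} (hc : ∑ l ∈ Finset.range c, f l = k) (hi : i ≤ k) :
    renewalSeq (truncateTop c f) i = renewalSeq f i := by
  unfold renewalSeq
  congr 1
  apply propext
  constructor
  · rintro ⟨j, hj⟩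
    refine ⟨j, ?_⟩
    rcases le_or_gt j c with hjc | hcj
    · rwa [sum_range_truncateTop hjc] at hj
    · have htop : truncateTop c f c = ⊤ := if_neg (lt_irrefl c)
      have : ⊤ ≤ ∑ l ∈ Finset.range j, truncateTop c f l :=
        htop ▸ Finset.single_le_sum (fun _ _ => zero_le) (Finset.mem_range.2 hcj)
      simp [hj] at this
  · rintro ⟨j, hj⟩
    rcases le_or_gt j c with hjc | hcj
    · exact ⟨j, by rwa [sum_range_truncateTop hjc]⟩
    · have : ((k : ℕ) : ℕ∞) ≤ i := by
        rw [← hj, ← hc]; exact Finset.sum_le_sum_of_subset (by simpa using hcj.le)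
      have : i = k := le_antisymm hi (ENat.natCast_le_natCast.1 this)
      exact ⟨c, by rw [sum_range_truncateTop le_rfl, hc, this]⟩

/-- Splitting at the renewal time `k`: the sum runs over the number `c` of inter-arrival times
before `k`; the `c`-th summand is a function of the first `c` terms of `f` times a function of the
remaining ones. -/
lemma mul_eq_sum_truncateTop (hf : ∀ l, 1 ≤ f l) {k : ℕ} {u : (ℕ → ℕ) → ℝ≥0∞}
    (hu_local : ∀ x y, (∀ i ≤ k, x i = y i) → u x = u y) (hu_zero : ∀ x, x k = 0 → u x = 0)
    (v : (ℕ → ℕ) → ℝ≥0∞) :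
    u (renewalSeq f) * v (fun i => renewalSeq f (k + i)) =
      ∑ c ∈ Finset.range (k + 1),
        (if ∑ l ∈ Finset.range c, truncateTop c f l = k then u (renewalSeq (truncateTop c f))
          else 0) * v (renewalSeq fun l => f (c + l)) := by
  by_cases hk : renewalSeq f k = 1
  · obtain ⟨c, hc⟩ := renewalSeq_eq_one_iff.1 hk
    have hck : c ≤ k := ENat.natCast_le_natCast.1 (hc ▸ card_le_sum_range hf c)
    rw [Finset.sum_eq_single c]
    · rw [sum_range_truncateTop le_rfl, if_pos hc,
        hu_local _ _ fun i hi => renewalSeq_truncateTop hc hi]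
      congr 2
      exact funext (renewalSeq_add hc)
    · intro c' _ hne
      rw [sum_range_truncateTop le_rfl, if_neg fun h => hne (eq_of_sum_range_eq hf h hc), zero_mul]
    · exact fun h => absurd (Finset.mem_range.2 (by omega)) h
  · rw [hu_zero _ (renewalSeq_eq_zero_of_ne_one hk), zero_mul]
    refine (Finset.sum_eq_zero fun c _ => ?_).symm
    rw [sum_range_truncateTop le_rfl, if_neg fun hc => hk (renewalSeq_eq_one_iff.2 ⟨c, hc⟩),
      zero_mul]

end RenewalSeq

section RenewalProperty

variable {P : Measure Ω} {T : ℕ → Ω → ℕ∞}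

lemma indepFun_truncateTop_shift (hTmeas : ∀ j, Measurable (T j)) (hTindep : iIndepFun T P)
    (c : ℕ) :
    IndepFun (fun ω => truncateTop c fun l => T l ω) (fun ω l => T (c + l) ω) P := by
  have hind := indep_iSup_of_disjoint (fun j => (hTmeas j).comap_le)
    ((iIndepFun_iff_iIndep _ _ _).1 hTindep) (Set.Iio_disjoint_Ici (a := c) le_rfl)
  set M : Set ℕ → MeasurableSpace Ω := fun S => ⨆ j ∈ S, MeasurableSpace.comap (T j) inferInstance
  have hle : ∀ {S : Set ℕ} {j : ℕ}, j ∈ S → Measurable[M S] (T j) := fun hj =>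
    (comap_measurable _).mono (le_iSup₂ (f := fun j (_ : j ∈ _) =>
      MeasurableSpace.comap (T j) inferInstance) _ hj) le_rfl
  have htrunc : Measurable[M (Set.Iio c)] fun ω => truncateTop c fun l => T l ω := by
    refine (@measurable_pi_iff Ω ℕ (fun _ => ℕ∞) (M _) _ _).2 fun l => ?_
    by_cases hl : l < c
    · simpa only [truncateTop, if_pos hl] using hle (S := Set.Iio c) hl
    · simpa only [truncateTop, if_neg hl] using @measurable_const _ _ _ (M _) ⊤
  have hshift : Measurable[M (Set.Ici c)] fun ω l => T (c + l) ω :=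
    (@measurable_pi_iff Ω ℕ (fun _ => ℕ∞) (M _) _ _).2 fun l => hle (S := Set.Ici c) (by simp)
  rw [IndepFun_iff_Indep]
  exact indep_of_indep_of_le_right (indep_of_indep_of_le_left hind htrunc.comap_le)
    hshift.comap_le

lemma map_shift_eq (hTmeas : ∀ j, Measurable (T j)) (hTindep : iIndepFun T P)
    (hTident : ∀ j, Measure.map (T j) P = Measure.map (T 0) P) (c : ℕ) :
    P.map (fun ω l => T (c + l) ω) = P.map (fun ω l => T l ω) := by
  rw [(hTindep.precomp (add_right_injective c)).map_fun_eq_infinitePi_map fun l => hTmeas _,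
    hTindep.map_fun_eq_infinitePi_map hTmeas]
  simp only [hTident]

lemma measurable_truncateTop (c : ℕ) : Measurable (truncateTop c) := by
  refine measurable_pi_lambda _ fun l => ?_
  by_cases hl : l < c
  · simpa only [truncateTop, if_pos hl] using measurable_pi_apply l
  · simpa only [truncateTop, if_neg hl] using measurable_const

lemma lintegral_comp_shift_xi (hTmeas : ∀ j, Measurable (T j)) (hTindep : iIndepFun T P)
    (hTident : ∀ j, Measure.map (T j) P = Measure.map (T 0) P) (c : ℕ) {v : (ℕ → ℕ) → ℝ≥0∞}
    (hv : Measurable v) :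
    ∫⁻ ω, v (renewalSeq fun l => T (c + l) ω) ∂P = ∫⁻ ω, v (fun i => xi T i ω) ∂P := by
  have hvr : Measurable (v ∘ renewalSeq) := hv.comp measurable_renewalSeq
  calc ∫⁻ ω, v (renewalSeq fun l => T (c + l) ω) ∂P
      = ∫⁻ f, (v ∘ renewalSeq) f ∂P.map (fun ω l => T (c + l) ω) :=
        (lintegral_map hvr (measurable_pi_lambda _ fun l => hTmeas _)).symm
    _ = ∫⁻ ω, v (fun i => xi T i ω) ∂P := by
        rw [map_shift_eq hTmeas hTindep hTident, lintegral_map hvr (measurable_pi_lambda _ hTmeas)]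
        rfl

lemma lintegral_truncateTop_mul_shift (hTmeas : ∀ j, Measurable (T j)) (hTindep : iIndepFun T P)
    (hTident : ∀ j, Measure.map (T j) P = Measure.map (T 0) P) (c : ℕ)
    {G : (ℕ → ℕ∞) → ℝ≥0∞} {v : (ℕ → ℕ) → ℝ≥0∞} (hG : Measurable G) (hv : Measurable v) :
    ∫⁻ ω, G (truncateTop c fun l => T l ω) * v (renewalSeq fun l => T (c + l) ω) ∂P =
      (∫⁻ ω, G (truncateTop c fun l => T l ω) ∂P) * ∫⁻ ω, v (fun i => xi T i ω) ∂P := by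
  have hpast : Measurable fun ω => G (truncateTop c fun l => T l ω) :=
    hG.comp ((measurable_truncateTop c).comp (measurable_pi_lambda _ hTmeas))
  have hfuture : Measurable fun ω => v (renewalSeq fun l => T (c + l) ω) :=
    (hv.comp measurable_renewalSeq).comp (measurable_pi_lambda _ fun l => hTmeas _)
  rw [lintegral_mul_eq_lintegral_mul_lintegral_of_indepFun'' hpast.aemeasurable
    hfuture.aemeasurable ((indepFun_truncateTop_shift hTmeas hTindep c).comp hG
      (hv.comp measurable_renewalSeq)), lintegral_comp_shift_xi hTmeas hTindep hTident c hv]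

/-- The renewal property of `ξ` at a fixed time `k`: on `{ξ_k = 1}` the future
`(ξ_{k+i})_i` is independent of the past `(ξ_i)_{i ≤ k}` and distributed as `ξ`. -/
theorem lintegral_mul_shift_xi (hT1 : ∀ j ω, 1 ≤ T j ω)
    (hTmeas : ∀ j, Measurable (T j)) (hTindep : iIndepFun T P)
    (hTident : ∀ j, Measure.map (T j) P = Measure.map (T 0) P) {k : ℕ}
    {u v : (ℕ → ℕ) → ℝ≥0∞} (hu : Measurable u) (hv : Measurable v)
    (hu_local : ∀ x y, (∀ i ≤ k, x i = y i) → u x = u y) (hu_zero : ∀ x, x k = 0 → u x = 0) :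
    ∫⁻ ω, u (fun i => xi T i ω) * v (fun i => xi T (k + i) ω) ∂P =
      (∫⁻ ω, u (fun i => xi T i ω) ∂P) * ∫⁻ ω, v (fun i => xi T i ω) ∂P := by
  set G : ℕ → (ℕ → ℕ∞) → ℝ≥0∞ := fun c g =>
    if ∑ l ∈ Finset.range c, g l = k then u (renewalSeq g) else 0
  have hG : ∀ c, Measurable (G c) := fun c =>
    Measurable.ite ((Finset.measurable_sum _ fun l _ => measurable_pi_apply l)
        (measurableSet_singleton (k : ℕ∞)))
      (hu.comp measurable_renewalSeq) measurable_const
  have hpast : ∀ c, Measurable fun ω => G c (truncateTop c fun l => T l ω) := fun c =>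
    (hG c).comp ((measurable_truncateTop c).comp (measurable_pi_lambda _ hTmeas))
  have hfuture : ∀ c, Measurable fun ω => v (renewalSeq fun l => T (c + l) ω) := fun c =>
    (hv.comp measurable_renewalSeq).comp (measurable_pi_lambda _ fun l => hTmeas _)
  have hdecomp : ∀ (w : (ℕ → ℕ) → ℝ≥0∞) ω,
      u (fun i => xi T i ω) * w (fun i => xi T (k + i) ω) =
        ∑ c ∈ Finset.range (k + 1),
          G c (truncateTop c fun l => T l ω) * w (renewalSeq fun l => T (c + l) ω) :=
    fun w ω => mul_eq_sum_truncateTop (fun l => hT1 l ω) hu_local hu_zero w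
  calc ∫⁻ ω, u (fun i => xi T i ω) * v (fun i => xi T (k + i) ω) ∂P
      = ∑ c ∈ Finset.range (k + 1), ∫⁻ ω, G c (truncateTop c fun l => T l ω) *
          v (renewalSeq fun l => T (c + l) ω) ∂P := by
        rw [lintegral_congr (hdecomp v), lintegral_finsetSum _ fun c _ => ?_]
        exact (hpast c).mul (hfuture c)
    _ = (∫⁻ ω, ∑ c ∈ Finset.range (k + 1), G c (truncateTop c fun l => T l ω) ∂P) *
          ∫⁻ ω, v (fun i => xi T i ω) ∂P := by
        rw [lintegral_finsetSum _ fun c _ => hpast c, Finset.sum_mul]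
        exact Finset.sum_congr rfl fun c _ =>
          lintegral_truncateTop_mul_shift hTmeas hTindep hTident c (hG c) hv
    _ = (∫⁻ ω, u (fun i => xi T i ω) ∂P) * ∫⁻ ω, v (fun i => xi T i ω) ∂P := by
        congr 1
        refine lintegral_congr fun ω => ?_
        simpa using (hdecomp 1 ω).symm

theorem lintegral_prod_blocks_xi [IsProbabilityMeasure P] (hT1 : ∀ j ω, 1 ≤ T j ω)
    (hTmeas : ∀ j, Measurable (T j)) (hTindep : iIndepFun T P)
    (hTident : ∀ j, Measure.map (T j) P = Measure.map (T 0) P) (m : ℕ) {t : ℕ → ℕ}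
    {u : ℕ → (ℕ → ℕ) → ℝ≥0∞} (hu : ∀ l, Measurable (u l))
    (hu_local : ∀ l x y, (∀ i ≤ t l, x i = y i) → u l x = u l y)
    (hu_zero : ∀ l x, x (t l) = 0 → u l x = 0) :
    ∫⁻ ω, ∏ l ∈ Finset.range m, u l (fun i => xi T (∑ j ∈ Finset.range l, t j + i) ω) ∂P =
      ∏ l ∈ Finset.range m, ∫⁻ ω, u l (fun i => xi T i ω) ∂P := by
  induction m generalizing t u with
  | zero => simp
  | succ m ih =>
    set v : (ℕ → ℕ) → ℝ≥0∞ := fun x =>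
      ∏ l ∈ Finset.range m, u (l + 1) (fun i => x (∑ j ∈ Finset.range l, t (j + 1) + i))
    have hv : Measurable v := Finset.measurable_prod _ fun l _ =>
      (hu _).comp (measurable_pi_lambda _ fun i => measurable_pi_apply _)
    have hsplit : ∀ ω,
        ∏ l ∈ Finset.range (m + 1), u l (fun i => xi T (∑ j ∈ Finset.range l, t j + i) ω) =
          u 0 (fun i => xi T i ω) * v (fun i => xi T (t 0 + i) ω) := by
      intro ω
      simp only [Finset.prod_range_succ' _ m, Finset.sum_range_succ', Finset.sum_range_zero,
        zero_add, v, mul_comm (u 0 _)]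
      simp only [add_comm, add_left_comm]
    rw [lintegral_congr hsplit, lintegral_mul_shift_xi hT1 hTmeas hTindep hTident (hu 0) hv
      (hu_local 0) (hu_zero 0), ih (fun l => hu (l + 1)) (fun l => hu_local (l + 1))
      (fun l => hu_zero (l + 1)), Finset.prod_range_succ' _ m, mul_comm]

end RenewalProperty

section Conditioning

variable {ι κ β : Type*} [MeasurableSpace β] {μ : Measure Ω} {Y : ι → Ω → β}

lemma measure_forall_mem_eq_prod (hY : ∀ i, Measurable (Y i)) (hYindep : iIndepFun Y μ)
    {i₀ : ι} (hYident : ∀ i, μ.map (Y i) = μ.map (Y i₀)) {s : Finset κ} {e : κ → ι}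
    (he : Set.InjOn e s) {A : κ → Set β} (hA : ∀ k, MeasurableSet (A k)) :
    μ {ω | ∀ k ∈ s, Y (e k) ω ∈ A k} = ∏ k ∈ s, μ {ω | Y i₀ ω ∈ A k} := by
  have hind : iIndepFun (fun k : s => Y (e k)) μ :=
    hYindep.precomp fun a b h => Subtype.ext (he a.2 b.2 h)
  have hset : {ω | ∀ k ∈ s, Y (e k) ω ∈ A k} = ⋂ k ∈ (Finset.univ : Finset s), Y (e k) ⁻¹' A k := by
    ext ω; simp
  rw [hset, hind.measure_inter_preimage_eq_mul _ fun k _ => hA k]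
  rw [← Finset.prod_coe_sort s]
  refine Finset.prod_congr rfl fun k _ => ?_
  change μ (Y (e k) ⁻¹' A k) = μ (Y i₀ ⁻¹' A k)
  rw [← Measure.map_apply (hY _) (hA k), hYident, Measure.map_apply (hY _) (hA k)]

variable {α : Type*} [MeasurableSpace α] [Countable α] [MeasurableSingletonClass α]
  [Countable β] [MeasurableSingletonClass β]

/-- Conditioning on a discrete process `X` independent of the i.i.d. family `Y`. -/
theorem measure_forall_mem_eq_lintegral_prod [IsFiniteMeasure μ] {X : ι → Ω → α}
    (hX : ∀ i, Measurable (X i)) (hY : ∀ i, Measurable (Y i)) (hYindep : iIndepFun Y μ)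
    {i₀ : ι} (hYident : ∀ i, μ.map (Y i) = μ.map (Y i₀))
    (hXY : IndepFun (fun ω i => X i ω) (fun ω i => Y i ω) μ) {s : Finset κ} {e : κ → ι}
    (he : Set.InjOn e s) (V : κ → α → Set β) :
    μ {ω | ∀ k ∈ s, Y (e k) ω ∈ V k (X (e k) ω)} =
      ∫⁻ ω, ∏ k ∈ s, μ {ω' | Y i₀ ω' ∈ V k (X (e k) ω)} ∂μ := by
  have hXm : Measurable fun ω i => X i ω := measurable_pi_lambda _ hX
  have hYm : Measurable fun ω i => Y i ω := measurable_pi_lambda _ hY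
  set S : Set ((ι → α) × (ι → β)) := {p | ∀ k ∈ s, p.2 (e k) ∈ V k (p.1 (e k))}
  have hS : MeasurableSet S := by
    have : S = ⋂ k ∈ s, (fun p : (ι → α) × (ι → β) => (p.1 (e k), p.2 (e k))) ⁻¹'
        {q | q.2 ∈ V k q.1} := by
      ext p; simp [S]
    rw [this]
    exact Finset.measurableSet_biInter _ fun k _ =>
      (((measurable_pi_apply _).comp measurable_fst).prodMk
        ((measurable_pi_apply _).comp measurable_snd)) .of_discrete
  calc μ {ω | ∀ k ∈ s, Y (e k) ω ∈ V k (X (e k) ω)}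
      = μ.map (fun ω => ((fun i => X i ω), fun i => Y i ω)) S := by
        rw [Measure.map_apply (hXm.prodMk hYm) hS]; rfl
    _ = ∫⁻ x, μ.map (fun ω i => Y i ω) (Prod.mk x ⁻¹' S) ∂μ.map (fun ω i => X i ω) := by
        rw [(indepFun_iff_map_prod_eq_prod_map_map hXm.aemeasurable hYm.aemeasurable).1 hXY,
          Measure.prod_apply hS]
    _ = ∫⁻ ω, ∏ k ∈ s, μ {ω' | Y i₀ ω' ∈ V k (X (e k) ω)} ∂μ := by
        rw [lintegral_map (measurable_measure_prodMk_left hS) hXm]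
        refine lintegral_congr fun ω => ?_
        rw [Measure.map_apply hYm (measurable_prodMk_left hS)]
        exact measure_forall_mem_eq_prod (A := fun k => V k (X (e k) ω)) hY hYindep hYident he
          fun _ => .of_discrete

end Conditioning

lemma Icc_one_add_one_eq_insert (n : ℕ) :
    Finset.Icc 1 (n + 1) = insert (n + 1) (Finset.Icc 1 n) := by
  ext; simp; omega

lemma forall_mem_Icc_one_add_one {p : ℕ → Prop} {n : ℕ} :
    (∀ j ∈ Finset.Icc 1 (n + 1), p j) ↔ p (n + 1) ∧ ∀ j ∈ Finset.Icc 1 n, p j := by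
  rw [Icc_one_add_one_eq_insert, Finset.forall_mem_insert]

lemma sInf_eq_natCast_iff {S : Set ℕ∞} {n : ℕ} : sInf S = n ↔ IsLeast S n := by
  refine ⟨fun h => ?_, IsLeast.csInf_eq⟩
  have hne : S.Nonempty := Set.nonempty_iff_ne_empty.2 fun hS => by simp [hS] at h
  exact h ▸ isLeast_csInf hne

/-- Site `s + j`, with `ξ_{s+j} = b`, is informed directly by site `s` iff
`R_{s+j} ∈ reachSet j b`. -/
def reachSet (j b : ℕ) : Set ℕ := {r | b = 1 ∧ j ≤ r}

/-- `R_{s+j} ∈ firstHitSet g j ξ_{s+j}` for all `j ∈ [1, g]` says that `s + g` is the first site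
after `s` informed directly by `s`. -/
def firstHitSet (g j b : ℕ) : Set ℕ := if j = g then reachSet j b else (reachSet j b)ᶜ

section DualProcess

omit [MeasurableSpace Ω]

variable {T : ℕ → Ω → ℕ∞} {R : ℕ → Ω → ℕ} {ω : Ω}

lemma xi_le_one (i : ℕ) : xi T i ω ≤ 1 := renewalSeq_le_one i

lemma Ydual_eq_one_iff_exists {i : ℕ} : Ydual T R i ω = 1 ↔ ∃ n, i ∈ Bset T R n ω := by
  unfold Ydual; split_ifs <;> simp_all

lemma Ydual_zero (ω : Ω) : Ydual T R 0 ω = 1 :=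
  Ydual_eq_one_iff_exists.2 ⟨0, by simp [Bset]⟩

lemma Ydual_eq_one_iff_of_pos {i : ℕ} (hi : 0 < i) :
    Ydual T R i ω = 1 ↔
      xi T i ω = 1 ∧ ∃ j < i, Ydual T R j ω = 1 ∧ i ≤ j + R i ω := by
  rw [Ydual_eq_one_iff_exists]
  constructor
  · rintro ⟨_ | n, hn⟩
    · simp only [Bset, Set.mem_singleton_iff] at hn; omega
    · simp only [Bset, Set.mem_ofPred_eq] at hn
      obtain ⟨hxi, ⟨j, hj, hjB⟩, -⟩ := hn
      obtain ⟨hjle, hjlt⟩ := Set.mem_Ico.1 hj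
      exact ⟨hxi, j, hjlt, Ydual_eq_one_iff_exists.2 ⟨n, hjB⟩, by omega⟩
  · rintro ⟨hxi, j, hji, hYj, hle⟩
    by_contra hnot
    push Not at hnot
    obtain ⟨n, hn⟩ := Ydual_eq_one_iff_exists.1 hYj
    apply hnot (n + 1)
    simp only [Bset, Set.mem_ofPred_eq]
    exact ⟨hxi, ⟨j, Set.mem_Ico.2 ⟨by omega, hji⟩, hn⟩, fun m _ => hnot m⟩

lemma Ydual_eq_one_iff_of_last {s j : ℕ} (hs : Ydual T R s ω = 1) (hj : 0 < j)
    (hgap : ∀ j', 0 < j' → j' < j → Ydual T R (s + j') ω ≠ 1) :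
    Ydual T R (s + j) ω = 1 ↔ R (s + j) ω ∈ reachSet j (xi T (s + j) ω) := by
  rw [Ydual_eq_one_iff_of_pos (by omega), reachSet, Set.mem_ofPred_eq]
  refine and_congr_right fun _ => ⟨?_, fun h => ⟨s, by omega, hs, by omega⟩⟩
  rintro ⟨i, hi, hYi, hle⟩
  have : i ≤ s := by
    by_contra hsi
    exact hgap (i - s) (by omega) (by omega) (by rwa [Nat.add_sub_cancel' (by omega)])
  omega

lemma forall_Ydual_ne_one_iff {s : ℕ} (hs : Ydual T R s ω = 1) (n : ℕ) :
    (∀ j ∈ Finset.Icc 1 n, Ydual T R (s + j) ω ≠ 1) ↔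
      ∀ j ∈ Finset.Icc 1 n, R (s + j) ω ∉ reachSet j (xi T (s + j) ω) := by
  induction n with
  | zero => simp
  | succ n ih =>
    have hlast : (∀ j ∈ Finset.Icc 1 n, Ydual T R (s + j) ω ≠ 1) →
        (Ydual T R (s + (n + 1)) ω = 1 ↔ R (s + (n + 1)) ω ∈ reachSet (n + 1) _) :=
      fun h => Ydual_eq_one_iff_of_last hs n.succ_pos fun j hj hjn =>
        h j (Finset.mem_Icc.2 ⟨hj, by omega⟩)
    rw [forall_mem_Icc_one_add_one, forall_mem_Icc_one_add_one, ← ih]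
    exact ⟨fun ⟨hY, h⟩ => ⟨(not_congr (hlast h)).1 hY, h⟩,
      fun ⟨hR, h⟩ => ⟨(not_congr (hlast h)).2 hR, h⟩⟩

lemma forall_Ydual_iff_firstHitSet {s g : ℕ} (hs : Ydual T R s ω = 1) (hg : 1 ≤ g) :
    (∀ j ∈ Finset.Icc 1 g, (Ydual T R (s + j) ω = 1 ↔ j = g)) ↔
      ∀ j ∈ Finset.Icc 1 g, R (s + j) ω ∈ firstHitSet g j (xi T (s + j) ω) := by
  obtain ⟨n, rfl⟩ : ∃ n, g = n + 1 := ⟨g - 1, by omega⟩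
  have hbefore : ∀ {p : ℕ → Prop},
      (∀ j ∈ Finset.Icc 1 n, (p j ↔ j = n + 1)) ↔ ∀ j ∈ Finset.Icc 1 n, ¬ p j :=
    forall₂_congr fun j hj => by
      have : j ≠ n + 1 := by have := Finset.mem_Icc.1 hj; omega
      simp [this]
  have hfirst : ∀ j ∈ Finset.Icc 1 n, (R (s + j) ω ∈ firstHitSet (n + 1) j (xi T (s + j) ω) ↔
      R (s + j) ω ∉ reachSet j (xi T (s + j) ω)) := fun j hj => by
    rw [firstHitSet, if_neg (by have := Finset.mem_Icc.1 hj; omega)]; rfl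
  rw [forall_mem_Icc_one_add_one, forall_mem_Icc_one_add_one, hbefore, forall₂_congr hfirst,
    firstHitSet, if_pos rfl, ← forall_Ydual_ne_one_iff hs n]
  simp only [iff_true]
  exact and_congr_left fun h => Ydual_eq_one_iff_of_last hs n.succ_pos fun j hj hjn =>
    h j (Finset.mem_Icc.2 ⟨hj, by omega⟩)

lemma renewalY_succ (l : ℕ) : renewalY T R (l + 1) ω =
    sInf {x : ℕ∞ | renewalY T R l ω < x ∧ ∃ i : ℕ, x = (i : ℕ∞) ∧ Ydual T R i ω = 1} := rfl

lemma Ydual_of_renewalY_eq {l s : ℕ} (h : renewalY T R l ω = s) : Ydual T R s ω = 1 := by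
  cases l with
  | zero =>
    obtain rfl : s = 0 := by exact_mod_cast (h.symm.trans rfl : (s : ℕ∞) = 0)
    exact Ydual_zero ω
  | succ l =>
    obtain ⟨-, i, hi, hYi⟩ := (sInf_eq_natCast_iff.1 h).1
    rwa [show s = i by exact_mod_cast hi]

lemma renewalY_succ_eq_iff {l s g : ℕ} (hl : renewalY T R l ω = s) (hg : 1 ≤ g) :
    renewalY T R (l + 1) ω = ((s + g : ℕ) : ℕ∞) ↔
      ∀ j ∈ Finset.Icc 1 g, (Ydual T R (s + j) ω = 1 ↔ j = g) := by
  rw [renewalY_succ, hl, sInf_eq_natCast_iff]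
  constructor
  · rintro ⟨⟨-, i, hi, hYi⟩, hleast⟩ j hj
    obtain rfl : i = s + g := by exact_mod_cast hi.symm
    obtain ⟨hj1, hjg⟩ := Finset.mem_Icc.1 hj
    refine ⟨fun hY => ?_, fun h => h ▸ hYi⟩
    have : ((s + g : ℕ) : ℕ∞) ≤ ((s + j : ℕ) : ℕ∞) :=
      hleast ⟨by exact_mod_cast (by omega : s < s + j), s + j, rfl, hY⟩
    have := ENat.natCast_le_natCast.1 this
    omega
  · intro h
    refine ⟨⟨by exact_mod_cast (by omega : s < s + g), s + g, rfl,
      (h g (Finset.mem_Icc.2 ⟨hg, le_rfl⟩)).2 rfl⟩, ?_⟩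
    rintro x ⟨hsx, i, rfl, hYi⟩
    have hsi : s < i := by exact_mod_cast hsx
    by_contra hlt
    have hig : i < s + g := by
      have := not_le.1 hlt; exact_mod_cast this
    have := (h (i - s) (Finset.mem_Icc.2 ⟨by omega, by omega⟩)).1
      (by rwa [Nat.add_sub_cancel' hsi.le])
    omega

lemma gapY_eq_iff_renewalY {l s t : ℕ} (hl : renewalY T R l ω = s) (ht : 1 ≤ t) :
    gapY T R l ω = t ↔ renewalY T R (l + 1) ω = ((s + t : ℕ) : ℕ∞) := by
  unfold gapY
  rw [hl]
  induction renewalY T R (l + 1) ω using ENat.recTopCoe with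
  | top => exact iff_of_false (by simp) (ENat.top_ne_natCast _)
  | coe r =>
    rw [← ENat.natCast_sub]
    norm_cast
    omega

lemma renewalY_eq_of_gapY {m : ℕ} {t : ℕ → ℕ} (ht : ∀ l < m, 1 ≤ t l)
    (h : ∀ l < m, gapY T R l ω = t l) :
    renewalY T R m ω = ((∑ l ∈ Finset.range m, t l : ℕ) : ℕ∞) := by
  induction m with
  | zero => rfl
  | succ m ih =>
    rw [Finset.sum_range_succ]
    exact (gapY_eq_iff_renewalY (ih (fun l hl => ht l (by omega)) fun l hl => h l (by omega))
      (ht m m.lt_succ_self)).1 (h m m.lt_succ_self)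

theorem gapY_eq_iff {m : ℕ} {t : ℕ → ℕ} (ht : ∀ l < m, 1 ≤ t l) :
    (∀ l < m, gapY T R l ω = t l) ↔
      ∀ l < m, ∀ j ∈ Finset.Icc 1 (t l), R (∑ i ∈ Finset.range l, t i + j) ω ∈
        firstHitSet (t l) j (xi T (∑ i ∈ Finset.range l, t i + j) ω) := by
  induction m with
  | zero => simp
  | succ m ih =>
    simp only [Nat.forall_lt_succ_right]
    rw [← ih fun l hl => ht l (by omega)]
    refine and_congr_right fun hgaps => ?_
    have hr := renewalY_eq_of_gapY (fun l hl => ht l (by omega)) hgaps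
    have htm := ht m m.lt_succ_self
    rw [gapY_eq_iff_renewalY hr htm, renewalY_succ_eq_iff hr htm,
      forall_Ydual_iff_firstHitSet (Ydual_of_renewalY_eq hr) htm]

lemma le_gapY_zero_iff (k : ℕ) :
    (k : ℕ∞) ≤ gapY T R 0 ω ↔
      ∀ j ∈ Finset.Icc 1 (k - 1), R j ω ∈ (reachSet j (xi T j ω))ᶜ := by
  have hY := forall_Ydual_ne_one_iff (T := T) (R := R) (ω := ω) (Ydual_zero ω) (k - 1)
  simp only [zero_add] at hY
  simp only [Set.mem_compl_iff]
  rw [← hY]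
  unfold gapY
  rw [renewalY_succ, show renewalY T R 0 ω = 0 from rfl, tsub_zero, le_sInf_iff]
  constructor
  · intro h j hj hYj
    have := h _ ⟨by exact_mod_cast (Finset.mem_Icc.1 hj).1, j, rfl, hYj⟩
    have := ENat.natCast_le_natCast.1 this
    have := Finset.mem_Icc.1 hj
    omega
  · rintro h x ⟨hx, i, rfl, hYi⟩
    by_contra hlt
    have hik : i < k := by exact_mod_cast not_le.1 hlt
    exact h i (Finset.mem_Icc.2 ⟨by exact_mod_cast hx, by omega⟩) hYi

end DualProcess

lemma injOn_sum_range_add (t : ℕ → ℕ) (m : ℕ) :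
    Set.InjOn (fun p : (_ : ℕ) × ℕ => ∑ i ∈ Finset.range p.1, t i + p.2)
      ((Finset.range m).sigma fun l => Finset.Icc 1 (t l)) := by
  have hlt : ∀ {a b i i' : ℕ}, a < b → i ≤ t a → 1 ≤ i' →
      ∑ l ∈ Finset.range a, t l + i < ∑ l ∈ Finset.range b, t l + i' := fun {a b i i'} hab hi hi' =>
    calc ∑ l ∈ Finset.range a, t l + i ≤ ∑ l ∈ Finset.range (a + 1), t l := by
          rw [Finset.sum_range_succ]; omega
      _ ≤ ∑ l ∈ Finset.range b, t l :=
          Finset.sum_le_sum_of_subset (Finset.range_subset_range.2 hab)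
      _ < ∑ l ∈ Finset.range b, t l + i' := by omega
  rintro ⟨l, j⟩ hp ⟨l', j'⟩ hp' h
  simp only [Finset.coe_sigma, Set.mem_sigma_iff, Finset.mem_coe, Finset.mem_Icc] at hp hp' h
  rcases lt_trichotomy l l' with hll | rfl | hll
  · exact absurd h (hlt hll hp.2.2 hp'.2.1).ne
  · rw [Nat.add_left_cancel h]
  · exact absurd h.symm (hlt hll hp'.2.2 hp.2.1).ne

def firstHitWeight (P : Measure Ω) (R : ℕ → Ω → ℕ) (g : ℕ) (x : ℕ → ℕ) : ℝ≥0∞ :=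
  (1 - alphaE P R (g - 1) ^ x g) * ∏ i ∈ Finset.Icc 1 (g - 1), alphaE P R (i - 1) ^ x i

section Probabilities

variable {P : Measure Ω} {T : ℕ → Ω → ℕ∞} {R : ℕ → Ω → ℕ}

lemma measurable_firstHitWeight (g : ℕ) : Measurable (firstHitWeight P R g) := by
  unfold firstHitWeight
  fun_prop

lemma firstHitWeight_congr {g : ℕ} {x y : ℕ → ℕ} (h : ∀ i ≤ g, x i = y i) :
    firstHitWeight P R g x = firstHitWeight P R g y := by
  unfold firstHitWeight
  rw [h g le_rfl]
  congr 1
  exact Finset.prod_congr rfl fun i hi => by rw [h i (by have := Finset.mem_Icc.1 hi; omega)]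

lemma firstHitWeight_of_eq_zero {g : ℕ} {x : ℕ → ℕ} (h : x g = 0) :
    firstHitWeight P R g x = 0 := by
  simp [firstHitWeight, h]

lemma measure_compl_reachSet [IsProbabilityMeasure P] {j b : ℕ} (hj : 1 ≤ j) (hb : b ≤ 1) :
    P {ω | R 0 ω ∈ (reachSet j b)ᶜ} = alphaE P R (j - 1) ^ b := by
  interval_cases b
  · simp [reachSet]
  · simp only [reachSet, true_and, pow_one, alphaE, Set.mem_compl_iff, Set.mem_ofPred_eq, not_le]
    congr 1
    ext ω
    simp only [Set.mem_ofPred_eq]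
    omega

lemma measure_reachSet [IsProbabilityMeasure P] (hR : Measurable (R 0)) {j b : ℕ} (hj : 1 ≤ j)
    (hb : b ≤ 1) : P {ω | R 0 ω ∈ reachSet j b} = 1 - alphaE P R (j - 1) ^ b := by
  have hmeas : MeasurableSet {ω | R 0 ω ∈ reachSet j b} := hR .of_discrete
  rw [← measure_compl_reachSet hj hb, show {ω | R 0 ω ∈ (reachSet j b)ᶜ} =
    {ω | R 0 ω ∈ reachSet j b}ᶜ from rfl, prob_compl_eq_one_sub hmeas,
    ENNReal.sub_sub_cancel ENNReal.one_ne_top prob_le_one]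

lemma prod_measure_firstHitSet [IsProbabilityMeasure P] (hR : Measurable (R 0)) {g : ℕ}
    (hg : 1 ≤ g) {x : ℕ → ℕ} (hx : ∀ i, x i ≤ 1) :
    ∏ j ∈ Finset.Icc 1 g, P {ω | R 0 ω ∈ firstHitSet g j (x j)} = firstHitWeight P R g x := by
  obtain ⟨n, rfl⟩ : ∃ n, g = n + 1 := ⟨g - 1, by omega⟩
  rw [Icc_one_add_one_eq_insert, Finset.prod_insert (by simp), firstHitSet, if_pos rfl,
    measure_reachSet hR hg (hx _), firstHitWeight, Nat.add_sub_cancel]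
  congr 1
  refine Finset.prod_congr rfl fun j hj => ?_
  have := Finset.mem_Icc.1 hj
  rw [firstHitSet, if_neg (by omega), measure_compl_reachSet this.1 (hx j)]

lemma measurable_xi (hTmeas : ∀ j, Measurable (T j)) (i : ℕ) : Measurable (xi T i) :=
  (measurable_pi_apply i).comp (measurable_renewalSeq.comp (measurable_pi_lambda _ hTmeas))

lemma indepFun_xi (hTR : IndepFun (fun ω => fun j => T j ω) (fun ω => fun i => R i ω) P) :
    IndepFun (fun ω i => xi T i ω) (fun ω i => R i ω) P :=
  hTR.comp measurable_renewalSeq measurable_id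

variable [IsProbabilityMeasure P] (hTmeas : ∀ j, Measurable (T j))
  (hRmeas : ∀ i, Measurable (R i)) (hRindep : iIndepFun R P)
  (hRident : ∀ i, Measure.map (R i) P = Measure.map (R 0) P)
  (hTR : IndepFun (fun ω => fun j => T j ω) (fun ω => fun i => R i ω) P)
include hTmeas hRmeas hRindep hRident hTR

theorem measure_gapY_eq_lintegral {m : ℕ} {t : ℕ → ℕ} (ht : ∀ l < m, 1 ≤ t l) :
    P {ω | ∀ l < m, gapY T R l ω = t l} =
      ∫⁻ ω, ∏ l ∈ Finset.range m,
        firstHitWeight P R (t l) (fun i => xi T (∑ j ∈ Finset.range l, t j + i) ω) ∂P := by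
  have hevent : {ω | ∀ l < m, gapY T R l ω = t l} =
      {ω | ∀ p ∈ (Finset.range m).sigma fun l => Finset.Icc 1 (t l),
        R (∑ j ∈ Finset.range p.1, t j + p.2) ω ∈
          firstHitSet (t p.1) p.2 (xi T (∑ j ∈ Finset.range p.1, t j + p.2) ω)} := by
    ext ω
    simp only [Set.mem_ofPred_eq, gapY_eq_iff ht, Finset.mem_sigma, Finset.mem_range, Sigma.forall]
    exact ⟨fun h l j hlj => h l hlj.1 j hlj.2, fun h l hl j hj => h l j ⟨hl, hj⟩⟩
  rw [hevent, measure_forall_mem_eq_lintegral_prod (X := fun i ω => xi T i ω) (measurable_xi hTmeas)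
    hRmeas hRindep hRident (indepFun_xi hTR) (injOn_sum_range_add t m)
    fun p b => firstHitSet (t p.1) p.2 b]
  refine lintegral_congr fun ω => ?_
  rw [Finset.prod_sigma]
  exact Finset.prod_congr rfl fun l hl =>
    prod_measure_firstHitSet (hRmeas 0) (ht l (Finset.mem_range.1 hl)) fun _ => xi_le_one _

theorem measure_gapY_zero_eq {g : ℕ} (hg : 1 ≤ g) :
    P {ω | gapY T R 0 ω = g} = ∫⁻ ω, firstHitWeight P R g (fun i => xi T i ω) ∂P := by
  simpa using measure_gapY_eq_lintegral (m := 1) (t := fun _ => g) hTmeas hRmeas hRindep hRident hTR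
    (fun _ _ => hg)

theorem measure_le_gapY_zero (k : ℕ) :
    P {ω | (k : ℕ∞) ≤ gapY T R 0 ω} =
      ∫⁻ ω, ∏ i ∈ Finset.Icc 1 (k - 1), alphaE P R (i - 1) ^ xi T i ω ∂P := by
  simp_rw [le_gapY_zero_iff]
  refine (measure_forall_mem_eq_lintegral_prod (X := fun i ω => xi T i ω) (e := id)
    (measurable_xi hTmeas) hRmeas hRindep hRident (indepFun_xi hTR) (Set.injOn_id _)
    fun j b => (reachSet j b)ᶜ).trans ?_
  exact lintegral_congr fun ω => Finset.prod_congr rfl fun i hi =>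
    measure_compl_reachSet (Finset.mem_Icc.1 hi).1 (xi_le_one _)

theorem measure_gapY_zero_eq_one (hT1 : ∀ j ω, 1 ≤ T j ω) :
    P {ω | gapY T R 0 ω = 1} = P {ω | T 0 ω = 1} * (1 - alphaE P R 0) := by
  have hweight : ∀ ω, firstHitWeight P R 1 (fun i => xi T i ω) =
      {ω | T 0 ω = 1}.indicator (fun _ => 1 - alphaE P R 0) ω := by
    intro ω
    by_cases h : T 0 ω = 1
    · have hxi : xi T 1 ω = 1 := (renewalSeq_one_eq_one_iff fun l => hT1 l ω).2 h
      simp [firstHitWeight, hxi, h]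
    · have hxi : xi T 1 ω = 0 :=
        renewalSeq_eq_zero_of_ne_one ((renewalSeq_one_eq_one_iff fun l => hT1 l ω).not.2 h)
      simp [firstHitWeight, hxi, h]
  have hgap := measure_gapY_zero_eq (g := 1) hTmeas hRmeas hRindep hRident hTR le_rfl
  have hmeas : MeasurableSet {ω | T 0 ω = 1} := hTmeas 0 (measurableSet_singleton 1)
  rw [Nat.cast_one] at hgap
  rw [hgap, lintegral_congr hweight, lintegral_indicator_const hmeas, mul_comm]

theorem measure_gapY_eq_prod (hT1 : ∀ j ω, 1 ≤ T j ω) (hTindep : iIndepFun T P)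
    (hTident : ∀ j, Measure.map (T j) P = Measure.map (T 0) P) {m : ℕ} {t : ℕ → ℕ}
    (ht : ∀ l < m, 1 ≤ t l) :
    P {ω | ∀ l < m, gapY T R l ω = t l} = ∏ l ∈ Finset.range m, P {ω | gapY T R 0 ω = t l} := by
  rw [measure_gapY_eq_lintegral hTmeas hRmeas hRindep hRident hTR ht,
    lintegral_prod_blocks_xi hT1 hTmeas hTindep hTident m (fun _ => measurable_firstHitWeight _)
      (fun _ _ _ => firstHitWeight_congr) (fun _ _ => firstHitWeight_of_eq_zero)]
  exact Finset.prod_congr rfl fun l hl =>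
    (measure_gapY_zero_eq hTmeas hRmeas hRindep hRident hTR (ht l (Finset.mem_range.1 hl))).symm

end Probabilities

theorem dual_is_renewal_general
    {Ω : Type*} [MeasurableSpace Ω]
    (P : Measure Ω) [IsProbabilityMeasure P]
    (T : ℕ → Ω → ℕ∞) (R : ℕ → Ω → ℕ)
    -- the inter-arrival times take values in {1,2,…} ∪ {∞}
    (hT1 : ∀ j ω, 1 ≤ T j ω)
    (hTmeas : ∀ j, Measurable (T j)) (hRmeas : ∀ i, Measurable (R i))
    -- the inter-arrival times are i.i.d.
    (hTindep : iIndepFun T P)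
    (hTident : ∀ j, Measure.map (T j) P = Measure.map (T 0) P)
    -- the radii are i.i.d.
    (hRindep : iIndepFun R P)
    (hRident : ∀ i, Measure.map (R i) P = Measure.map (R 0) P)
    -- the radii are independent of the renewal sequence
    (hTR : IndepFun (fun ω => fun j => T j ω) (fun ω => fun i => R i ω) P) :
    -- Y_0 = 1
    (∀ ω, Ydual T R 0 ω = 1) ∧
    -- the gaps between successive 1's of Y are i.i.d.
    (∀ m : ℕ, ∀ t : Fin m → ℕ, (∀ l, 1 ≤ t l) →
      P {ω | ∀ l : Fin m, gapY T R (l : ℕ) ω = (t l : ℕ∞)} =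
        ∏ l : Fin m, P {ω | gapY T R 0 ω = (t l : ℕ∞)}) ∧
    -- P(T_Y = 1) = P(T = 1)(1 - α_0)
    (P {ω | gapY T R 0 ω = 1} = P {ω | T 0 ω = 1} * (1 - alphaE P R 0)) ∧
    -- P(T_Y = k) = E[(1 - α_{k-1}^{ξ_k}) ∏_{i=1}^{k-1} α_{i-1}^{ξ_i}] for k ≥ 2
    (∀ k : ℕ, 2 ≤ k →
      P {ω | gapY T R 0 ω = (k : ℕ∞)} =
        ∫⁻ ω, (1 - (alphaE P R (k - 1)) ^ (xi T k ω)) *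
          ∏ i ∈ Finset.Icc 1 (k - 1), (alphaE P R (i - 1)) ^ (xi T i ω) ∂P) ∧
    -- P(T_Y ≥ k) = E[∏_{i=1}^{k-1} α_{i-1}^{ξ_i}] for k ≥ 2
    (∀ k : ℕ, 2 ≤ k →
      P {ω | (k : ℕ∞) ≤ gapY T R 0 ω} =
        ∫⁻ ω, ∏ i ∈ Finset.Icc 1 (k - 1), (alphaE P R (i - 1)) ^ (xi T i ω) ∂P) := by
  refine ⟨Ydual_zero, fun m t ht => ?_,
    measure_gapY_zero_eq_one hTmeas hRmeas hRindep hRident hTR hT1,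
    fun k hk => measure_gapY_zero_eq hTmeas hRmeas hRindep hRident hTR (by omega),
    fun k _ => measure_le_gapY_zero hTmeas hRmeas hRindep hRident hTR k⟩
  set t' : ℕ → ℕ := fun l => if h : l < m then t ⟨l, h⟩ else 0
  have hevent : {ω | ∀ l : Fin m, gapY T R l ω = t l} = {ω | ∀ l < m, gapY T R l ω = t' l} := by
    ext ω
    simp only [Set.mem_ofPred_eq, Fin.forall_iff, t']
    exact forall₂_congr fun l hl => by rw [dif_pos hl]
  rw [hevent, measure_gapY_eq_prod hTmeas hRmeas hRindep hRident hTR hT1 hTindep hTident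
    fun l hl => by simpa only [t', dif_pos hl] using ht ⟨l, hl⟩, ← Fin.prod_univ_eq_prod_range]
  exact Finset.prod_congr rfl fun l _ => by simp only [t', dif_pos l.2]

/-- Assume `E T < ∞`. The dual process `Y` is an undelayed
renewal sequence: `Y_0 = 1`, the gaps between successive `1`'s are i.i.d.
copies of a variable `T_Y` with `P(T_Y = 1) = P(T = 1)(1 - α_0)`,
`P(T_Y = k) = E[(1 - α_{k-1}^{ξ_k}) ∏_{i=1}^{k-1} α_{i-1}^{ξ_i}]` and
`P(T_Y ≥ k) = E[∏_{i=1}^{k-1} α_{i-1}^{ξ_i}]` for `k ≥ 2`. -/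
theorem dual_is_renewal
    {Ω : Type*} [MeasurableSpace Ω]
    (P : Measure Ω) [IsProbabilityMeasure P]
    (T : ℕ → Ω → ℕ∞) (R : ℕ → Ω → ℕ)
    -- the inter-arrival times take values in {1,2,…} ∪ {∞}
    (hT1 : ∀ j ω, 1 ≤ T j ω)
    (hTmeas : ∀ j, Measurable (T j)) (hRmeas : ∀ i, Measurable (R i))
    -- the inter-arrival times are i.i.d.
    (hTindep : iIndepFun T P)
    (hTident : ∀ j, Measure.map (T j) P = Measure.map (T 0) P)
    -- the radii are i.i.d.
    (hRindep : iIndepFun R P)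
    (hRident : ∀ i, Measure.map (R i) P = Measure.map (R 0) P)
    -- the radii are independent of the renewal sequence
    (hTR : IndepFun (fun ω => fun j => T j ω) (fun ω => fun i => R i ω) P)
    (hET : ET P T < ⊤) :
    -- Y_0 = 1
    (∀ ω, Ydual T R 0 ω = 1) ∧
    -- the gaps between successive 1's of Y are i.i.d.
    (∀ m : ℕ, ∀ t : Fin m → ℕ, (∀ l, 1 ≤ t l) →
      P {ω | ∀ l : Fin m, gapY T R (l : ℕ) ω = (t l : ℕ∞)} =
        ∏ l : Fin m, P {ω | gapY T R 0 ω = (t l : ℕ∞)}) ∧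
    -- P(T_Y = 1) = P(T = 1)(1 - α_0)
    (P {ω | gapY T R 0 ω = 1} = P {ω | T 0 ω = 1} * (1 - alphaE P R 0)) ∧
    -- P(T_Y = k) = E[(1 - α_{k-1}^{ξ_k}) ∏_{i=1}^{k-1} α_{i-1}^{ξ_i}] for k ≥ 2
    (∀ k : ℕ, 2 ≤ k →
      P {ω | gapY T R 0 ω = (k : ℕ∞)} =
        ∫⁻ ω, (1 - (alphaE P R (k - 1)) ^ (xi T k ω)) *
          ∏ i ∈ Finset.Icc 1 (k - 1), (alphaE P R (i - 1)) ^ (xi T i ω) ∂P) ∧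
    -- P(T_Y ≥ k) = E[∏_{i=1}^{k-1} α_{i-1}^{ξ_i}] for k ≥ 2
    (∀ k : ℕ, 2 ≤ k →
      P {ω | (k : ℕ∞) ≤ gapY T R 0 ω} =
        ∫⁻ ω, ∏ i ∈ Finset.Icc 1 (k - 1), (alphaE P R (i - 1)) ^ (xi T i ω) ∂P) :=
  dual_is_renewal_general P T R hT1 hTmeas hRmeas hTindep hTident hRindep hRident hTR

end RenewalPerc
end
end

section
/- (Coupling merging bound) For every k ≥ 0 and every j ≥ 1, P(T_k ≥ j) ≤ ∏_{i=1}^{j−1} q^*_{k+i−1} (the empty product for j = 1 being 1). -/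
/-!
If `T_k ≥ j`, then at every time `l = 1, …, j - 1` some chain `ζ^{(n)}` with `n ≤ k` survives
the step `l - 1 → l`, i.e. `U_l ≤ q_{ζ^{(n)}_{l-1}}`. A chain grows by at most one per step, so
`ζ^{(n)}_{l-1} ≤ k + l - 1` and hence `U_l ≤ q^*_{k+l-1}`. These `j - 1` events are independent,
and each has probability at most `q^*_{k+l-1}` because `U_l` is uniform on `[0,1)`.
-/

open MeasureTheory ProbabilityTheory Filter Set
open scoped ENNReal Classical

noncomputable section

namespace RenewalPerc

lemma qstar_nonneg {q : ℕ → ℝ} (h0 : 0 ≤ q 0) (i : ℕ) : 0 ≤ qstar q i :=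
  h0.trans (Finset.le_sup' q (Finset.mem_range.2 i.succ_pos))

lemma le_qstar (q : ℕ → ℝ) {m i : ℕ} (hm : m ≤ i) : q m ≤ qstar q i :=
  Finset.le_sup' q (Finset.mem_range.2 (Nat.lt_succ_of_le hm))

section HouseOfCards

variable {Ω : Type*} (q : ℕ → ℝ) (U : ℕ → Ω → ℝ) (ω : Ω)

lemma hoc_le_add (n l : ℕ) : hoc q U n l ω ≤ n + l := by
  induction l with
  | zero => simp [hoc]
  | succ l ih =>
    simp only [hoc]
    split <;> omega

variable {q U ω}

lemma le_q_hoc_of_hoc_succ_ne_zero {n l : ℕ} (h : hoc q U n (l + 1) ω ≠ 0) :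
    U (l + 1) ω ≤ q (hoc q U n l ω) := by
  by_contra hU
  simp [hoc, hU] at h

lemma le_qstar_of_hoc_succ_ne_zero {n k l : ℕ} (hn : n ≤ k) (h : hoc q U n (l + 1) ω ≠ 0) :
    U (l + 1) ω ≤ qstar q (k + l) :=
  (le_q_hoc_of_hoc_succ_ne_zero h).trans
    (le_qstar q ((hoc_le_add q U ω n l).trans (Nat.add_le_add_right hn l)))

lemma exists_hoc_ne_zero_of_lt_mergeT {k l : ℕ} (h : ((l + 1 : ℕ) : ℕ∞) < mergeT q U k ω) :
    ∃ n ≤ k, hoc q U n (l + 1) ω ≠ 0 := by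
  by_contra! hall
  exact h.not_ge (sInf_le ⟨l + 1, rfl, l.succ_pos, hall⟩)

variable (q U)

lemma setOf_le_mergeT_subset (k j : ℕ) :
    {ω | (j : ℕ∞) ≤ mergeT q U k ω} ⊆
      ⋂ i ∈ Finset.range (j - 1), {ω | U (i + 1) ω ≤ qstar q (k + i)} := by
  intro ω hω
  simp only [mem_iInter, Finset.mem_range, mem_ofPred_eq]
  intro i hi
  have hlt : ((i + 1 : ℕ) : ℕ∞) < j := by exact_mod_cast (by omega : i + 1 < j)
  obtain ⟨n, hn, hne⟩ := exists_hoc_ne_zero_of_lt_mergeT (hlt.trans_le hω)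
  exact le_qstar_of_hoc_succ_ne_zero hn hne

end HouseOfCards

variable {Ω : Type*} [MeasurableSpace Ω]

lemma measure_setOf_le_le_ofReal {X : Ω → ℝ} {P : Measure Ω}
    (hX : P.map X = volume.restrict (Ico 0 1)) (c : ℝ) :
    P {ω | X ω ≤ c} ≤ ENNReal.ofReal c := by
  have hXm : AEMeasurable X P := AEMeasurable.of_map_ne_zero (by simp [hX])
  calc P {ω | X ω ≤ c} = P.map X (Iic c) :=
      (Measure.map_apply_of_aemeasurable hXm measurableSet_Iic).symm
    _ = volume (Iic c ∩ Ico 0 1) := by rw [hX, Measure.restrict_apply measurableSet_Iic]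
    _ ≤ volume (Icc 0 c) := measure_mono fun x ⟨hxc, h0x, _⟩ => ⟨h0x, hxc⟩
    _ = ENNReal.ofReal c := by rw [Real.volume_Icc, sub_zero]

lemma measure_biInter_setOf_le_le_ofReal_prod {ι : Type*} {U : ι → Ω → ℝ} {P : Measure Ω}
    (hindep : iIndepFun U P) (s : Finset ι)
    (hunif : ∀ i ∈ s, P.map (U i) = volume.restrict (Ico 0 1))
    {c : ι → ℝ} (hc : ∀ i ∈ s, 0 ≤ c i) :
    P (⋂ i ∈ s, {ω | U i ω ≤ c i}) ≤ ENNReal.ofReal (∏ i ∈ s, c i) := by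
  rw [hindep.meas_biInter (s := fun i => {ω | U i ω ≤ c i})
      fun i _ => ⟨Iic (c i), measurableSet_Iic, rfl⟩,
    ENNReal.ofReal_prod_of_nonneg hc]
  exact Finset.prod_le_prod' fun i hi => measure_setOf_le_le_ofReal (hunif i hi) (c i)

theorem coupling_merging_bound_general
    {Ω : Type*} [MeasurableSpace Ω]
    (P : Measure Ω)
    (q : ℕ → ℝ) (hq : ∀ i, 0 ≤ q i ∧ q i < 1)
    (U : ℕ → Ω → ℝ)
    -- the U_l are i.i.d. uniform on [0,1)
    (hUindep : iIndepFun U P)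
    (hUunif : ∀ l : ℕ, 1 ≤ l →
      Measure.map (U l) P = MeasureTheory.volume.restrict (Set.Ico (0 : ℝ) 1))
    (k j : ℕ) :
    P {ω | (j : ℕ∞) ≤ mergeT q U k ω} ≤
      ENNReal.ofReal (∏ i ∈ Finset.range (j - 1), qstar q (k + i)) :=
  calc P {ω | (j : ℕ∞) ≤ mergeT q U k ω}
      ≤ P (⋂ i ∈ Finset.range (j - 1), {ω | U (i + 1) ω ≤ qstar q (k + i)}) :=
        measure_mono (setOf_le_mergeT_subset q U k j)
    _ ≤ ENNReal.ofReal (∏ i ∈ Finset.range (j - 1), qstar q (k + i)) :=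
        measure_biInter_setOf_le_le_ofReal_prod (hUindep.precomp (add_left_injective 1)) _
          (fun i _ => hUunif (i + 1) i.succ_pos) fun _ _ => qstar_nonneg (hq 0).1 _

/-- **Coupling merging bound.** For every `k ≥ 0` and `j ≥ 1`,
`P(T_k ≥ j) ≤ ∏_{i=1}^{j-1} q*_{k+i-1}`. -/
theorem coupling_merging_bound
    {Ω : Type*} [MeasurableSpace Ω]
    (P : Measure Ω) [IsProbabilityMeasure P]
    (q : ℕ → ℝ) (hq : ∀ i, 0 ≤ q i ∧ q i < 1)
    (U : ℕ → Ω → ℝ)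
    (hUmeas : ∀ l, Measurable (U l))
    -- the U_l are i.i.d. uniform on [0,1)
    (hUindep : iIndepFun U P)
    (hUunif : ∀ l : ℕ, 1 ≤ l →
      Measure.map (U l) P = MeasureTheory.volume.restrict (Set.Ico (0 : ℝ) 1))
    (k j : ℕ) (hj : 1 ≤ j) :
    P {ω | (j : ℕ∞) ≤ mergeT q U k ω} ≤
      ENNReal.ofReal (∏ i ∈ Finset.range (j - 1), qstar q (k + i)) :=
  coupling_merging_bound_general P q hq U hUindep hUunif k j

end RenewalPerc
end
end

section
/- (Doeblin for large indices) Suppose there exist ε > 0 and i* ∈ ℕ such that q_j ≤ 1 − ε for all j ≥ i*. Then sup_{k≥1} (∑_{j=1}^{k} P(T_k ≥ j))^2 < ∞; in particular (∑_{j=1}^{k} P(T_k ≥ j))^2 = O(k). -/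
open MeasureTheory ProbabilityTheory Filter Set
open scoped ENNReal Classical

noncomputable section

namespace RenewalPerc

variable {Ω : Type*} [MeasurableSpace Ω]

/-!
Below `i*` there are only finitely many `q_j`, each `< 1`, so together with the Doeblin condition
the `q_j` are bounded by a single `Q < 1`. Whenever `U_l > Q`, every chain is sent to `0` at step `l`,
so all chains are at `0` simultaneously. Hence `T_k ≥ j` forces `U_1, …, U_{j-1} ≤ Q`, an event of
probability at most `Q^{j-1}`, and `∑_{j=1}^k P(T_k ≥ j)` is bounded by the geometric series
`1 / (1 - Q)`, uniformly in `k`.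
-/

lemma exists_forall_le_lt_one_of_eventually_le {q : ℕ → ℝ} (hq : ∀ i, q i < 1) {c : ℝ}
    (hc : c < 1) {N : ℕ} (hqc : ∀ j, N ≤ j → q j ≤ c) :
    ∃ Q, 0 ≤ Q ∧ Q < 1 ∧ ∀ j, q j ≤ Q := by
  refine ⟨max (qstar q N) (max c 0), le_max_of_le_right (le_max_right _ _),
    max_lt ((Finset.sup'_lt_iff _).mpr fun i _ => hq i) (max_lt hc one_pos), fun j => ?_⟩
  rcases le_or_gt j N with h | h
  · exact le_max_of_le_left (Finset.le_sup' q (Finset.mem_range.mpr (Nat.lt_succ_of_le h)))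
  · exact le_max_of_le_right (le_max_of_le_left (hqc j h.le))

section Coupling

variable {Ω : Type*} {q : ℕ → ℝ} {U : ℕ → Ω → ℝ} {Q : ℝ}

lemma hoc_succ_eq_zero {n l : ℕ} {ω : Ω} (h : q (hoc q U n l ω) < U (l + 1) ω) :
    hoc q U n (l + 1) ω = 0 :=
  if_neg h.not_ge

lemma mergeT_le_of_lt {k l : ℕ} {ω : Ω} (hqQ : ∀ j, q j ≤ Q) (hl : 1 ≤ l) (hU : Q < U l ω) :
    mergeT q U k ω ≤ l := by
  obtain ⟨m, rfl⟩ := Nat.exists_eq_add_of_le' hl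
  exact sInf_le ⟨m + 1, rfl, hl, fun n _ => hoc_succ_eq_zero ((hqQ _).trans_lt hU)⟩

lemma setOf_le_mergeT_subset_s18 (hqQ : ∀ j, q j ≤ Q) (k j : ℕ) :
    {ω | (j : ℕ∞) ≤ mergeT q U k ω} ⊆ ⋂ l ∈ Finset.Ico 1 j, U l ⁻¹' Iic Q := by
  intro ω hω
  simp only [mem_iInter, Finset.mem_Ico, mem_preimage, mem_Iic]
  intro l ⟨hl1, hlj⟩
  by_contra! hU
  exact hlj.not_ge (by exact_mod_cast hω.trans (mergeT_le_of_lt hqQ hl1 hU))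

end Coupling

lemma measure_preimage_Iic_le_of_map_eq_uniform {P : Measure Ω} {X : Ω → ℝ}
    (hX : Measurable X) (hXunif : P.map X = volume.restrict (Ico (0 : ℝ) 1)) (x : ℝ) :
    P (X ⁻¹' Iic x) ≤ ENNReal.ofReal x := by
  rw [← Measure.map_apply hX measurableSet_Iic, hXunif, Measure.restrict_apply measurableSet_Iic]
  calc volume (Iic x ∩ Ico 0 1) ≤ volume (Icc 0 x) :=
        measure_mono fun y ⟨hyx, hy0, _⟩ => ⟨hy0, hyx⟩
    _ = ENNReal.ofReal x := by rw [Real.volume_Icc, sub_zero]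

lemma measure_le_mergeT_le_pow {P : Measure Ω} {q : ℕ → ℝ} {U : ℕ → Ω → ℝ} {Q : ℝ}
    (hUmeas : ∀ l, Measurable (U l)) (hUindep : iIndepFun U P)
    (hUunif : ∀ l : ℕ, 1 ≤ l → P.map (U l) = volume.restrict (Ico (0 : ℝ) 1))
    (hqQ : ∀ j, q j ≤ Q) (k j : ℕ) :
    P {ω | (j : ℕ∞) ≤ mergeT q U k ω} ≤ ENNReal.ofReal Q ^ (j - 1) :=
  calc P {ω | (j : ℕ∞) ≤ mergeT q U k ω}
      ≤ P (⋂ l ∈ Finset.Ico 1 j, U l ⁻¹' Iic Q) := measure_mono (setOf_le_mergeT_subset_s18 hqQ k j)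
    _ = ∏ l ∈ Finset.Ico 1 j, P (U l ⁻¹' Iic Q) :=
        hUindep.measure_inter_preimage_eq_mul _ fun _ _ => measurableSet_Iic
    _ ≤ ENNReal.ofReal Q ^ (j - 1) := by
        rw [← Nat.card_Ico 1 j]
        exact Finset.prod_le_pow_card _ _ _ fun l hl =>
          measure_preimage_Iic_le_of_map_eq_uniform (hUmeas l)
            (hUunif l (Finset.mem_Ico.mp hl).1) Q

lemma sum_Icc_pow_sub_one_le {Q : ℝ} (hQ0 : 0 ≤ Q) (hQ1 : Q < 1) (k : ℕ) :
    ∑ j ∈ Finset.Icc 1 k, Q ^ (j - 1) ≤ (1 - Q)⁻¹ := by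
  rw [← Finset.Ico_add_one_right_eq_Icc, Finset.sum_Ico_eq_sum_range, Finset.range_eq_Ico]
  simpa using geom_sum_Ico_le_of_lt_one (m := 0) (n := k) hQ0 hQ1

lemma sum_toReal_measure_le_mergeT_le {P : Measure Ω}
    {q : ℕ → ℝ} {U : ℕ → Ω → ℝ} {Q : ℝ}
    (hUmeas : ∀ l, Measurable (U l)) (hUindep : iIndepFun U P)
    (hUunif : ∀ l : ℕ, 1 ≤ l → P.map (U l) = volume.restrict (Ico (0 : ℝ) 1))
    (hQ0 : 0 ≤ Q) (hQ1 : Q < 1) (hqQ : ∀ j, q j ≤ Q) (k : ℕ) :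
    ∑ j ∈ Finset.Icc 1 k, (P {ω | (j : ℕ∞) ≤ mergeT q U k ω}).toReal ≤ (1 - Q)⁻¹ := by
  refine (Finset.sum_le_sum fun j _ => ?_).trans (sum_Icc_pow_sub_one_le hQ0 hQ1 k)
  refine ENNReal.toReal_le_of_le_ofReal (pow_nonneg hQ0 _) ?_
  rw [ENNReal.ofReal_pow hQ0]
  exact measure_le_mergeT_le_pow hUmeas hUindep hUunif hqQ k j

lemma isBigO_natCast_of_forall_norm_le {f : ℕ → ℝ} {C : ℝ} (hf : ∀ k, ‖f k‖ ≤ C) :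
    f =O[atTop] (fun k : ℕ => (k : ℝ)) :=
  (Asymptotics.isBigO_one_nat_atTop_iff.mpr ⟨C, hf⟩).trans
    ((Asymptotics.isLittleO_one_left_iff ℝ).mpr
      (tendsto_norm_atTop_atTop.comp tendsto_natCast_atTop_atTop)).isBigO

theorem merging_doeblin_large_indices_general
    {Ω : Type*} [MeasurableSpace Ω]
    (P : Measure Ω)
    (q : ℕ → ℝ) (hq : ∀ i, 0 ≤ q i ∧ q i < 1)
    (U : ℕ → Ω → ℝ)
    (hUmeas : ∀ l, Measurable (U l))
    -- the U_l are i.i.d. uniform on [0,1)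
    (hUindep : iIndepFun U P)
    (hUunif : ∀ l : ℕ, 1 ≤ l →
      Measure.map (U l) P = MeasureTheory.volume.restrict (Set.Ico (0 : ℝ) 1))
    (ε : ℝ) (hε : 0 < ε) (istar : ℕ)
    (hdoeblin : ∀ j, istar ≤ j → q j ≤ 1 - ε) :
    (∃ c : ℝ, ∀ k : ℕ, 1 ≤ k →
      (∑ j ∈ Finset.Icc 1 k, (P {ω | (j : ℕ∞) ≤ mergeT q U k ω}).toReal) ^ 2 ≤ c) ∧
    (fun k : ℕ =>
        (∑ j ∈ Finset.Icc 1 k, (P {ω | (j : ℕ∞) ≤ mergeT q U k ω}).toReal) ^ 2)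
      =O[Filter.atTop] (fun k : ℕ => (k : ℝ)) := by
  obtain ⟨Q, hQ0, hQ1, hqQ⟩ :=
    exists_forall_le_lt_one_of_eventually_le (fun i => (hq i).2) (by linarith) hdoeblin
  have hbound : ∀ k : ℕ,
      ‖(∑ j ∈ Finset.Icc 1 k, (P {ω | (j : ℕ∞) ≤ mergeT q U k ω}).toReal) ^ 2‖ ≤ (1 - Q)⁻¹ ^ 2 := by
    intro k
    have hnonneg : 0 ≤ ∑ j ∈ Finset.Icc 1 k, (P {ω | (j : ℕ∞) ≤ mergeT q U k ω}).toReal :=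
      Finset.sum_nonneg fun _ _ => ENNReal.toReal_nonneg
    rw [norm_pow, Real.norm_of_nonneg hnonneg]
    exact pow_le_pow_left₀ hnonneg
      (sum_toReal_measure_le_mergeT_le hUmeas hUindep hUunif hQ0 hQ1 hqQ k) 2
  exact ⟨⟨_, fun k _ => (Real.le_norm_self _).trans (hbound k)⟩, isBigO_natCast_of_forall_norm_le hbound⟩

/-- **Doeblin for large indices.** If `q_j ≤ 1 - ε` for all
`j ≥ i*`, then `sup_k (∑_{j=1}^k P(T_k ≥ j))² < ∞`; in particular
`(∑_{j=1}^k P(T_k ≥ j))² = O(k)`. -/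
theorem merging_doeblin_large_indices
    {Ω : Type*} [MeasurableSpace Ω]
    (P : Measure Ω) [IsProbabilityMeasure P]
    (q : ℕ → ℝ) (hq : ∀ i, 0 ≤ q i ∧ q i < 1)
    (U : ℕ → Ω → ℝ)
    (hUmeas : ∀ l, Measurable (U l))
    -- the U_l are i.i.d. uniform on [0,1)
    (hUindep : iIndepFun U P)
    (hUunif : ∀ l : ℕ, 1 ≤ l →
      Measure.map (U l) P = MeasureTheory.volume.restrict (Set.Ico (0 : ℝ) 1))
    (ε : ℝ) (hε : 0 < ε) (istar : ℕ)
    (hdoeblin : ∀ j, istar ≤ j → q j ≤ 1 - ε) :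
    (∃ c : ℝ, ∀ k : ℕ, 1 ≤ k →
      (∑ j ∈ Finset.Icc 1 k, (P {ω | (j : ℕ∞) ≤ mergeT q U k ω}).toReal) ^ 2 ≤ c) ∧
    (fun k : ℕ =>
        (∑ j ∈ Finset.Icc 1 k, (P {ω | (j : ℕ∞) ≤ mergeT q U k ω}).toReal) ^ 2)
      =O[Filter.atTop] (fun k : ℕ => (k : ℝ)) :=
  merging_doeblin_large_indices_general P q hq U hUmeas hUindep hUunif ε hε istar hdoeblin

end RenewalPerc
end
end
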